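/- arXiv:2503.24221 — 4 statements merged into one kernel-verified Lean document; each statement's English description precedes it below -/
import Mathlib

section
/- Let L = ∏_{i∈I} L_i be a product of fields with an action of a group G by ring automorphisms which acts transitively on the set of principal idempotents {e_i}. Let M be a module over the skew group ring L ⋊ G such that the natural map M → ∏_i e_i·M is an isomorphism and dim_{L_i}(e_i·M) < ∞ for some i. Then M is a free L-module of finite rank. -/
namespace SkewAux

variable {I : Type*} [DecidableEq I] {L : I → Type*} [∀ i, Field (L i)]

lemma one_mul_single (i : I) (a : ∀ i, L i) :
    (Pi.single i (1 : L i) : ∀ i, L i) * a = Pi.single i (a i) := by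
  rw [← Pi.single_mul_left, one_mul]

lemma mul_one_single (i : I) (a : ∀ i, L i) :
    a * (Pi.single i (1 : L i) : ∀ i, L i) = Pi.single i (a i) := by
  rw [mul_comm, one_mul_single]

variable (L) in
def V (M : Type*) [AddCommGroup M] [Module (∀ i, L i) M] (i : I) : AddSubgroup M where
  carrier := {m | (Pi.single i (1 : L i) : ∀ i, L i) • m = m}
  zero_mem' := smul_zero _
  add_mem' := fun ha hb => by
    simp only [Set.mem_setOf_eq] at *
    rw [smul_add, ha, hb]
  neg_mem' := fun ha => by
    simp only [Set.mem_setOf_eq] at *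
    rw [smul_neg, ha]

variable {M : Type*} [AddCommGroup M] [Module (∀ i, L i) M]

lemma smul_mem_V (i : I) (c : L i) {m : M} (_hm : m ∈ V L M i) :
    (Pi.single i c : ∀ i, L i) • m ∈ V L M i := by
  show (Pi.single i 1 : ∀ i, L i) • _ = _
  rw [← mul_smul, one_mul_single, Pi.single_eq_same]

instance (i : I) : SMul (L i) (V L M i) :=
  ⟨fun c m => ⟨(Pi.single i c : ∀ i, L i) • m.1, smul_mem_V i c m.2⟩⟩

lemma coe_smul (i : I) (c : L i) (m : V L M i) :
    ((c • m : V L M i) : M) = (Pi.single i c : ∀ i, L i) • (m : M) := rfl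

instance (i : I) : Module (L i) (V L M i) where
  one_smul m := Subtype.ext (by rw [coe_smul]; exact m.2)
  mul_smul c d m := Subtype.ext (by
    simp only [coe_smul]
    rw [← mul_smul, ← Pi.single_mul])
  smul_zero c := Subtype.ext (by simp [coe_smul])
  smul_add c m n := Subtype.ext (by simp [coe_smul, smul_add])
  add_smul c d m := Subtype.ext (by
    simp [coe_smul, Pi.single_add, add_smul])
  zero_smul m := Subtype.ext (by simp [coe_smul])

lemma e_smul_mem (i : I) (m : M) :
    (Pi.single i (1 : L i) : ∀ i, L i) • m ∈ V L M i := by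
  show (Pi.single i (1 : L i) : ∀ i, L i) • _ = _
  rw [← mul_smul, one_mul_single, Pi.single_eq_same]

lemma coe_sum (i : I) {κ : Type*} (t : Finset κ) (f : κ → V L M i) :
    ((∑ k ∈ t, f k : V L M i) : M) = ∑ k ∈ t, ((f k : M)) :=
  map_sum ((V L M i).subtype) f t

end SkewAux


open SkewAux in
/-- Let `L = ∏ᵢ Lᵢ` be a product of fields with an action of a
group `G` by ring automorphisms acting transitively on the principal
idempotents, and let `M` be a module over the skew group ring `L ⋊ G`
(an `L`-module with a compatible `G`-semilinear action `μ`).  If the natural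
map `M → ∏ᵢ eᵢ·M` is bijective and `eᵢ₀·M` is finite-dimensional over `Lᵢ₀`
(i.e. finitely generated) for some `i₀`, then `M` is free of finite rank
over `L`. -/
theorem free_of_finite_rank_of_skew_module
    {I : Type*} [DecidableEq I] (L : I → Type*) [∀ i, Field (L i)]
    {G : Type*} [Group G] [MulSemiringAction G (∀ i, L i)]
    (htrans : ∀ i j : I, ∃ g : G,
      g • (Pi.single i (1 : L i) : ∀ i, L i) = Pi.single j (1 : L j))
    {M : Type*} [AddCommGroup M] [Module (∀ i, L i) M]
    (μ : G →* Multiplicative (AddAut M))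
    (hsemi : ∀ (g : G) (a : ∀ i, L i) (m : M), Multiplicative.toAdd (μ g) (a • m) = (g • a) • Multiplicative.toAdd (μ g) m)
    (hinj : ∀ m : M, (∀ i : I, (Pi.single i (1 : L i) : ∀ i, L i) • m = 0) → m = 0)
    (hsurj : ∀ f : I → M,
      (∀ i, ∃ m : M, f i = (Pi.single i (1 : L i) : ∀ i, L i) • m) →
      ∃ m : M, ∀ i, (Pi.single i (1 : L i) : ∀ i, L i) • m = f i)
    (i₀ : I)
    (hfin : (Submodule.span (∀ i, L i)
      (Set.range fun m : M => (Pi.single i₀ (1 : L i₀) : ∀ i, L i) • m)).FG) :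
    Module.Free (∀ i, L i) M ∧ Module.Finite (∀ i, L i) M := by
  classical
  have hμinv0 : ∀ (h : G) (m : M),
      Multiplicative.toAdd (μ h⁻¹) (Multiplicative.toAdd (μ h) m) = m := by
    intro h m
    rw [← AddAut.add_apply, ← toAdd_mul, ← map_mul, inv_mul_cancel, map_one, toAdd_one,
      AddAut.zero_apply]
  let μ : G → AddAut M := fun g => Multiplicative.toAdd (μ g)
  replace hsemi : ∀ (g : G) (a : ∀ i, L i) (m : M), μ g (a • m) = (g • a) • μ g m := hsemi
  let ι : ∀ i, V L M i →+ M := fun i => (V L M i).subtype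
  -- Step 1: V L M i₀ is finite dimensional over L i₀
  have hVfin : Module.Finite (L i₀) (V L M i₀) := by
    obtain ⟨s, hs⟩ := hfin
    rw [Module.finite_def]
    refine ⟨s.image (fun x => (⟨(Pi.single i₀ (1 : L i₀) : ∀ i, L i) • x,
      e_smul_mem i₀ x⟩ : V L M i₀)), ?_⟩
    rw [eq_top_iff]
    rintro v -
    have hv1 : (v : M) ∈ Submodule.span (∀ i, L i) (↑s : Set M) := by
      rw [hs]
      exact Submodule.subset_span ⟨(v : M), v.2⟩
    obtain ⟨f, -, hf⟩ := Submodule.mem_span_finset.1 hv1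
    have hM : (v : M) = ∑ x ∈ s, (Pi.single i₀ (f x i₀) : ∀ i, L i) • x := by
      conv_lhs => rw [← v.2, ← hf, Finset.smul_sum]
      exact Finset.sum_congr rfl fun x _ => by rw [← mul_smul, one_mul_single]
    have hveq : v = ∑ x ∈ s, (f x i₀) •
        (⟨(Pi.single i₀ (1 : L i₀) : ∀ i, L i) • x, e_smul_mem i₀ x⟩ : V L M i₀) := by
      apply Subtype.ext
      rw [coe_sum, hM]
      refine Finset.sum_congr rfl fun x hx => ?_
      rw [coe_smul]
      show _ = (Pi.single i₀ (f x i₀) : ∀ i, L i) • ((Pi.single i₀ (1 : L i₀) : ∀ i, L i) • x)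
      rw [← mul_smul, mul_one_single, Pi.single_eq_same]
    rw [hveq]
    exact Submodule.sum_mem _ fun x hx => Submodule.smul_mem _ _
      (Submodule.subset_span (Finset.mem_coe.2 (Finset.mem_image_of_mem _ hx)))
  haveI := hVfin
  -- Step 2: basis of V L M i₀
  set n := Module.finrank (L i₀) (V L M i₀) with hn
  let b : Module.Basis (Fin n) (L i₀) (V L M i₀) := Module.finBasis _ _
  -- Step 3: transitivity elements
  choose g hg using fun i => htrans i₀ i
  have hginv : ∀ i, (g i)⁻¹ • (Pi.single i (1 : L i) : ∀ i, L i)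
      = (Pi.single i₀ (1 : L i₀) : ∀ i, L i) := by
    intro i
    rw [← hg i, inv_smul_smul]
  -- basic facts about μ
  have hμinv : ∀ (h : G) (m : M), μ h⁻¹ (μ h m) = m := by
    intro h m
    exact hμinv0 h m
  have hμinv' : ∀ (h : G) (m : M), μ h (μ h⁻¹ m) = m := by
    intro h m
    have := hμinv h⁻¹ m
    rwa [inv_inv] at this
  -- conjugation of single elements
  have hconj : ∀ (i : I) (c : L i₀),
      g i • (Pi.single i₀ c : ∀ i, L i)
        = Pi.single i ((g i • (Pi.single i₀ c : ∀ i, L i)) i) := by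
    intro i c
    conv_lhs => rw [show (Pi.single i₀ c : ∀ i, L i)
      = (Pi.single i₀ (1 : L i₀) : ∀ i, L i) * Pi.single i₀ c by
        rw [one_mul_single, Pi.single_eq_same]]
    rw [smul_mul', hg i, one_mul_single]
  have hconj' : ∀ (i : I) (d : L i),
      (g i)⁻¹ • (Pi.single i d : ∀ i, L i)
        = Pi.single i₀ (((g i)⁻¹ • (Pi.single i d : ∀ i, L i)) i₀) := by
    intro i d
    conv_lhs => rw [show (Pi.single i d : ∀ i, L i)
      = (Pi.single i (1 : L i) : ∀ i, L i) * Pi.single i d by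
        rw [one_mul_single, Pi.single_eq_same]]
    rw [smul_mul', hginv i, one_mul_single]
  -- Step 4: μ (g i) maps V i₀ into V i and back
  have key1 : ∀ (i : I) (m : M), m ∈ V L M i₀ → μ (g i) m ∈ V L M i := by
    intro i m hm
    show (Pi.single i (1 : L i) : ∀ i, L i) • μ (g i) m = μ (g i) m
    rw [← hg i, ← hsemi, hm]
  have key1' : ∀ (i : I) (m : M), m ∈ V L M i → μ (g i)⁻¹ m ∈ V L M i₀ := by
    intro i m hm
    show (Pi.single i₀ (1 : L i₀) : ∀ i, L i) • μ (g i)⁻¹ m = μ (g i)⁻¹ m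
    rw [← hginv i, ← hsemi, hm]
  -- the candidate bases of each V i
  let w : ∀ i, Fin n → V L M i := fun i k => ⟨μ (g i) (b k).1, key1 i _ (b k).2⟩
  -- Step 5: independence of w i over L i
  have hwind : ∀ (i : I) (d : Fin n → L i), ∑ k, d k • w i k = 0 → ∀ k, d k = 0 := by
    intro i d hd k
    have hd' : ∑ k, (Pi.single i (d k) : ∀ i, L i) • μ (g i) (b k).1 = (0 : M) := by
      have := congrArg (ι i) hd
      rwa [map_sum (ι i) _ Finset.univ, map_zero] at this
    have h2 : ∑ k, ((g i)⁻¹ • (Pi.single i (d k) : ∀ i, L i)) • ((b k) : M) = (0 : M) := by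
      have := congrArg (μ (g i)⁻¹) hd'
      rw [map_sum, map_zero] at this
      simpa only [hsemi, hμinv] using this
    have h3 : ∑ k, (((g i)⁻¹ • (Pi.single i (d k) : ∀ i, L i)) i₀) • b k
        = (0 : V L M i₀) := by
      apply Subtype.ext
      rw [coe_sum, ZeroMemClass.coe_zero, ← h2]
      refine Finset.sum_congr rfl fun k' _ => ?_
      rw [coe_smul, ← hconj' i (d k')]
    have hc0 := Fintype.linearIndependent_iff.1 b.linearIndependent _ h3 k
    have hz : (g i)⁻¹ • (Pi.single i (d k) : ∀ i, L i) = 0 := by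
      rw [hconj' i (d k), hc0, Pi.single_zero]
    have hsd : (Pi.single i (d k) : ∀ i, L i) = 0 := by
      have := congrArg (fun a => g i • a) hz
      simpa [smul_inv_smul] using this
    have := congrFun hsd i
    rwa [Pi.single_eq_same] at this
  -- Step 6: spanning of w i
  have hwspan : ∀ (i : I) (x : V L M i), ∃ c : Fin n → L i₀,
      (x : M) = ∑ k, (g i • (Pi.single i₀ (c k) : ∀ i, L i)) • μ (g i) (b k).1 := by
    intro i x
    let y : V L M i₀ := ⟨μ (g i)⁻¹ (x : M), key1' i _ x.2⟩
    refine ⟨fun k => b.repr y k, ?_⟩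
    have hy := b.sum_repr y
    have hy' : ∑ k, (Pi.single i₀ (b.repr y k) : ∀ i, L i) • ((b k) : M)
        = μ (g i)⁻¹ (x : M) := by
      have := congrArg (ι i₀) hy
      rwa [map_sum (ι i₀) _ Finset.univ] at this
    have h4 := congrArg (μ (g i)) hy'
    rw [map_sum, hμinv'] at h4
    rw [← h4]
    exact Finset.sum_congr rfl fun k _ => by rw [hsemi]
  -- Step 7: glue to get B k
  have hBex : ∀ k : Fin n, ∃ B : M, ∀ i,
      (Pi.single i (1 : L i) : ∀ i, L i) • B = μ (g i) (b k).1 := by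
    intro k
    obtain ⟨m, hm⟩ := hsurj (fun i => μ (g i) (b k).1)
      (fun i => ⟨μ (g i) (b k).1, (key1 i _ (b k).2).symm⟩)
    exact ⟨m, hm⟩
  choose B hB using hBex
  -- Step 8: linear independence of B over L
  have li : LinearIndependent (∀ i, L i) B := by
    rw [Fintype.linearIndependent_iff]
    intro a ha k
    funext i
    have h1 : ∑ k, (Pi.single i (a k i) : ∀ i, L i) • μ (g i) (b k).1 = (0 : M) := by
      have := congrArg (fun m : M => (Pi.single i (1 : L i) : ∀ i, L i) • m) ha
      simp only [smul_zero, Finset.smul_sum] at this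
      rw [← this]
      refine Finset.sum_congr rfl fun k' _ => ?_
      rw [← hB k' i, ← mul_smul, ← mul_smul, mul_one_single, Pi.single_eq_same,
        one_mul_single]
    have hd : ∑ k, (a k i) • w i k = (0 : V L M i) := by
      apply Subtype.ext
      rw [coe_sum, ZeroMemClass.coe_zero, ← h1]
      exact Finset.sum_congr rfl fun k' _ => by rw [coe_smul]
    exact hwind i _ hd k
  -- Step 9: B spans M over L
  have hspan : ⊤ ≤ Submodule.span (∀ i, L i) (Set.range B) := by
    rintro m -
    choose c hc using fun i => hwspan i ⟨(Pi.single i (1 : L i) : ∀ i, L i) • m,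
      e_smul_mem i m⟩
    set a : Fin n → ∀ i, L i :=
      fun k i => (g i • (Pi.single i₀ (c i k) : ∀ i, L i)) i with hadef
    have hmain : ∀ i, (Pi.single i (1 : L i) : ∀ i, L i) • (∑ k, a k • B k)
        = (Pi.single i (1 : L i) : ∀ i, L i) • m := by
      intro i
      rw [Finset.smul_sum]
      have hterm : ∀ k ∈ Finset.univ, (Pi.single i (1 : L i) : ∀ i, L i) • a k • B k
          = (g i • (Pi.single i₀ (c i k) : ∀ i, L i)) • μ (g i) (b k).1 := by
        intro k _
        rw [← hB k i, ← mul_smul, ← mul_smul]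
        congr 1
        simp only [hadef, one_mul_single, mul_one_single]
      rw [Finset.sum_congr rfl hterm]
      exact (hc i).symm
    have hzero : ∑ k, a k • B k - m = 0 := by
      apply hinj
      intro i
      rw [smul_sub, hmain i, sub_self]
    have hm : m = ∑ k, a k • B k := (sub_eq_zero.mp hzero).symm
    rw [hm]
    exact Submodule.sum_mem _ fun k _ => Submodule.smul_mem _ _
      (Submodule.subset_span ⟨k, rfl⟩)
  let basis : Module.Basis (Fin n) (∀ i, L i) M := Module.Basis.mk li hspan
  exact ⟨Module.Free.of_basis basis, Module.Finite.of_basis basis⟩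
end

section
/- Let L = ∏_{i∈I} L_i be a finite product of fields with an action of a group G acting transitively on the principal idempotents, and let M be an L ⋊ G-module such that M → ∏_i e_i·M is an isomorphism. Then M is a free L-module (possibly of infinite rank). -/
section SkewAux

variable {I : Type*} [DecidableEq I] {L : I → Type*} [∀ i, Field (L i)]
  {M : Type*} [AddCommGroup M] [Module (∀ i, L i) M]

lemma single_one_mul (i : I) (a : ∀ i, L i) :
    (Pi.single i (1 : L i) : ∀ i, L i) * a = Pi.single i (a i) := by
  funext j
  simp only [Pi.mul_apply, Pi.single_apply]
  by_cases h : j = i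
  · subst h; simp
  · simp [h]

lemma single_mul_single_one (i : I) (x : L i) :
    Pi.single i x * (Pi.single i (1 : L i) : ∀ i, L i) = Pi.single i x := by
  rw [mul_comm, single_one_mul, Pi.single_eq_same]

lemma single_smul_single_one_smul (i : I) (x : L i) (m : M) :
    Pi.single i x • (Pi.single i (1 : L i) : ∀ i, L i) • m = Pi.single i x • m := by
  rw [← mul_smul, single_mul_single_one]

/-- The submodule `eᵢ·M`. -/
def skewSub (L : I → Type*) [∀ i, Field (L i)] (M : Type*) [AddCommGroup M]
    [Module (∀ i, L i) M] (i : I) : Submodule (∀ i, L i) M where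
  carrier := {m | (Pi.single i (1 : L i) : ∀ i, L i) • m = m}
  add_mem' := by intro a b ha hb; simp only [Set.mem_setOf_eq, smul_add] at *; rw [ha, hb]
  zero_mem' := by simp
  smul_mem' := by
    intro a m hm
    simp only [Set.mem_setOf_eq] at *
    rw [← mul_smul, mul_comm, mul_smul, hm]

lemma mem_skewSub {i : I} {m : M} :
    m ∈ skewSub L M i ↔ (Pi.single i (1 : L i) : ∀ i, L i) • m = m := Iff.rfl

noncomputable instance skewSubSMul (i : I) : SMul (L i) (skewSub L M i) :=
  ⟨fun x m => ⟨Pi.single i x • (m : M), by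
    rw [mem_skewSub, ← mul_smul, single_one_mul, Pi.single_eq_same]⟩⟩

lemma skewSub_smul_coe (i : I) (x : L i) (m : skewSub L M i) :
    ((x • m : skewSub L M i) : M) = Pi.single i x • (m : M) := rfl

noncomputable instance skewSubModule (i : I) : Module (L i) (skewSub L M i) where
  one_smul m := by
    apply Subtype.ext
    rw [skewSub_smul_coe]
    exact m.2
  mul_smul x y m := by
    apply Subtype.ext
    simp only [skewSub_smul_coe]
    rw [← mul_smul, ← Pi.single_mul]
  smul_zero x := by apply Subtype.ext; simp [skewSub_smul_coe]
  smul_add x m n := by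
    apply Subtype.ext
    simp [skewSub_smul_coe, smul_add]
  add_smul x y m := by
    apply Subtype.ext
    simp only [skewSub_smul_coe, Submodule.coe_add]
    rw [Pi.single_add, add_smul]
  zero_smul m := by
    apply Subtype.ext
    simp only [skewSub_smul_coe, Submodule.coe_zero]
    rw [Pi.single_zero, zero_smul]

end SkewAux

/-- Let `L = ∏ᵢ Lᵢ` be a finite product of fields with an action
of a group `G` by ring automorphisms acting transitively on the principal
idempotents, and let `M` be a module over the skew group ring `L ⋊ G` such that
the natural map `M → ∏ᵢ eᵢ·M` is bijective.  Then `M` is a free `L`-module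
(possibly of infinite rank). -/
theorem free_of_skew_module_finite_index
    {I : Type*} [Finite I] [DecidableEq I] (L : I → Type*) [∀ i, Field (L i)]
    {G : Type*} [Group G] [MulSemiringAction G (∀ i, L i)]
    (htrans : ∀ i j : I, ∃ g : G,
      g • (Pi.single i (1 : L i) : ∀ i, L i) = Pi.single j (1 : L j))
    {M : Type*} [AddCommGroup M] [Module (∀ i, L i) M]
    (μ : G →* Multiplicative (AddAut M))
    (hsemi : ∀ (g : G) (a : ∀ i, L i) (m : M), (μ g).toAdd (a • m) = (g • a) • (μ g).toAdd m)
    (hinj : ∀ m : M, (∀ i : I, (Pi.single i (1 : L i) : ∀ i, L i) • m = 0) → m = 0)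
    (hsurj : ∀ f : I → M,
      (∀ i, ∃ m : M, f i = (Pi.single i (1 : L i) : ∀ i, L i) • m) →
      ∃ m : M, ∀ i, (Pi.single i (1 : L i) : ∀ i, L i) • m = f i) :
    Module.Free (∀ i, L i) M := by
  classical
  have hμ : ∃ μ' : G → (M ≃+ M),
      (∀ (g : G) (a : ∀ i, L i) (m : M), μ' g (a • m) = (g • a) • μ' g m) ∧
      (∀ (g : G) (x : M), μ' g⁻¹ (μ' g x) = x) ∧ (∀ (g : G) (x : M), μ' g (μ' g⁻¹ x) = x) := by
    refine ⟨fun g => (μ g).toAdd, hsemi, fun g x => ?_, fun g x => ?_⟩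
    · show (Multiplicative.toAdd (μ g⁻¹ * μ g)) x = x
      rw [← map_mul, inv_mul_cancel, map_one]; rfl
    · show (Multiplicative.toAdd (μ g * μ g⁻¹)) x = x
      rw [← map_mul, mul_inv_cancel, map_one]; rfl
  clear hsemi μ
  obtain ⟨μ, hsemi, hμ1, hμ2⟩ := hμ
  cases isEmpty_or_nonempty I with
  | inl hI =>
      haveI : Subsingleton M :=
        ⟨fun a b => by
          rw [hinj a (fun i => isEmptyElim i), hinj b (fun i => isEmptyElim i)]⟩
      infer_instance
  | inr hI =>
      obtain ⟨i₀⟩ := hI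
      -- the image of a "single" element under a group element moving eᵢ to eⱼ
      have keyA : ∀ (g : G) (i j : I),
          g • (Pi.single i (1 : L i) : ∀ i, L i) = Pi.single j (1 : L j) →
          ∀ a : L i, g • (Pi.single i a : ∀ i, L i)
            = Pi.single j ((g • (Pi.single i a : ∀ i, L i)) j) := by
        intro g i j hg a
        conv_lhs => rw [← single_mul_single_one i a, mul_comm, smul_mul', hg, single_one_mul]
      have keyM : ∀ (g : G) (i j : I),
          g • (Pi.single i (1 : L i) : ∀ i, L i) = Pi.single j (1 : L j) →
          ∀ m ∈ skewSub L M i, μ g m ∈ skewSub L M j := by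
        intro g i j hg m hm
        rw [mem_skewSub] at hm ⊢
        rw [← hg, ← hsemi, hm]
      have hrank : ∀ i : I,
          Module.rank (L i₀) (skewSub L M i₀) = Module.rank (L i) (skewSub L M i) := by
        intro i
        obtain ⟨g, hg⟩ := htrans i₀ i
        have hg' : g⁻¹ • (Pi.single i (1 : L i) : ∀ i, L i) = Pi.single i₀ (1 : L i₀) := by
          rw [← hg, inv_smul_smul]
        refine rank_eq_of_equiv_equiv
          (⟨fun a => (g • (Pi.single i₀ a : ∀ i, L i)) i, by simp⟩ : ZeroHom (L i₀) (L i))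
          ({ toFun := fun x => ⟨μ g x, keyM g i₀ i hg x x.2⟩
             invFun := fun y => ⟨μ g⁻¹ y, keyM g⁻¹ i i₀ hg' y y.2⟩
             left_inv := fun x => Subtype.ext (by
               show μ g⁻¹ (μ g x) = x
               exact hμ1 g x)
             right_inv := fun y => Subtype.ext (by
               show μ g (μ g⁻¹ y) = y
               exact hμ2 g y)
             map_add' := fun x y => Subtype.ext (by
               show μ g (x + y : M) = μ g x + μ g y
               exact map_add _ _ _) } : skewSub L M i₀ ≃+ skewSub L M i)
          ?_ ?_
        · constructor
          · intro a b hab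
            have ha := keyA g i₀ i hg a
            have hb := keyA g i₀ i hg b
            have : g • (Pi.single i₀ a : ∀ i, L i) = g • (Pi.single i₀ b : ∀ i, L i) := by
              rw [ha, hb]; exact congrArg _ hab
            have h2 := smul_left_cancel g this
            have := congrFun h2 i₀
            simpa using this
          · intro b
            refine ⟨(g⁻¹ • (Pi.single i b : ∀ i, L i)) i₀, ?_⟩
            have := keyA g⁻¹ i i₀ hg' b
            show (g • (Pi.single i₀ ((g⁻¹ • (Pi.single i b : ∀ i, L i)) i₀) : ∀ i, L i)) i = b
            rw [← this, smul_inv_smul, Pi.single_eq_same]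
        · intro r m
          apply Subtype.ext
          show μ g ((Pi.single i₀ r : ∀ i, L i) • m) = Pi.single i _ • (μ g m : M)
          rw [hsemi, keyA g i₀ i hg r]; rfl
      -- transport bases
      have hcard : ∀ i : I,
          Nonempty ((Module.Basis.ofVectorSpaceIndex (L i) (skewSub L M i)) ≃
            (Module.Basis.ofVectorSpaceIndex (L i₀) (skewSub L M i₀))) := by
        intro i
        refine Cardinal.eq.mp ?_
        rw [Module.Basis.mk_eq_rank'' (Module.Basis.ofVectorSpace _ _),
          Module.Basis.mk_eq_rank'' (Module.Basis.ofVectorSpace _ _), hrank i]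
      set κ := (Module.Basis.ofVectorSpaceIndex (L i₀) (skewSub L M i₀)) with hκ
      have c : ∀ i : I, Module.Basis κ (L i) (skewSub L M i) :=
        fun i => (Module.Basis.ofVectorSpace (L i) _).reindex (hcard i).some
      -- construct the candidate basis vectors of M
      have hex : ∀ k : κ, ∃ m : M,
          ∀ i : I, (Pi.single i (1 : L i) : ∀ i, L i) • m = ((c i k : M)) :=
        fun k => hsurj (fun i => (c i k : M)) (fun i => ⟨(c i k : M), ((c i k).2).symm⟩)
      choose mfun hmfun using hex
      -- key computation
      have hkey : ∀ (i : I) (l : κ →₀ ∀ i, L i),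
          (Pi.single i (1 : L i) : ∀ i, L i) • (Finsupp.linearCombination _ mfun l)
            = ((∑ k ∈ l.support, (l k i) • c i k : skewSub L M i) : M) := by
        intro i l
        rw [Finsupp.linearCombination_apply, Finsupp.sum, Finset.smul_sum,
          AddSubmonoidClass.coe_finset_sum]
        refine Finset.sum_congr rfl (fun k _ => ?_)
        rw [skewSub_smul_coe, ← hmfun k i, single_smul_single_one_smul,
          ← mul_smul, single_one_mul]
      -- linear independence
      have hind : LinearIndependent (∀ i, L i) mfun := by
        rw [linearIndependent_iff]
        intro l hl
        ext k i
        set d : κ →₀ L i := l.mapRange (fun a => a i) rfl with hd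
        have h1 : ((∑ k ∈ l.support, (l k i) • c i k : skewSub L M i) : M) = 0 := by
          rw [← hkey i l, hl, smul_zero]
        have h2 : (∑ k ∈ l.support, (l k i) • c i k : skewSub L M i) = 0 :=
          ZeroMemClass.coe_eq_zero.mp h1
        have h3 : Finsupp.linearCombination (L i) (c i) d
            = ∑ k ∈ l.support, (l k i) • c i k := by
          rw [Finsupp.linearCombination_apply, Finsupp.sum]
          rw [Finset.sum_subset Finsupp.support_mapRange
            (fun k _ hk => by rw [Finsupp.notMem_support_iff.mp hk, zero_smul])]
          exact Finset.sum_congr rfl (fun k _ => by rw [Finsupp.mapRange_apply])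
        have h4 : d = 0 := by
          have := congrArg (c i).repr (h3.trans h2)
          rwa [Module.Basis.repr_linearCombination, map_zero] at this
        have h5 : d k = 0 := by rw [h4]; rfl
        rwa [Finsupp.mapRange_apply] at h5
      -- spanning
      have hspan : ∀ m : M, m ∈ Submodule.span (∀ i, L i) (Set.range mfun) := by
        intro m
        haveI := Fintype.ofFinite I
        have hx : ∀ i : I, (Pi.single i (1 : L i) : ∀ i, L i) • m ∈ skewSub L M i := by
          intro i
          rw [mem_skewSub, ← mul_smul, single_one_mul, Pi.single_eq_same]
        set d : ∀ i : I, (κ →₀ L i) :=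
          fun i => (c i).repr ⟨(Pi.single i (1 : L i) : ∀ i, L i) • m, hx i⟩ with hdd
        set l : κ →₀ ∀ i, L i :=
          ∑ i : I, (d i).mapRange (fun a => (Pi.single i a : ∀ i, L i)) (Pi.single_zero i)
            with hll
        have hlk : ∀ (k : κ) (i : I), l k i = d i k := by
          intro k i
          rw [hll, Finset.sum_apply']
          simp only [Finsupp.mapRange_apply]
          rw [Finset.sum_apply]
          simp [Pi.single_apply]
        have hsupp : ∀ i : I, (d i).support ⊆ l.support := by
          intro i k hk
          rw [Finsupp.mem_support_iff] at hk ⊢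
          intro h0
          exact hk (by rw [← hlk k i, h0]; rfl)
        rw [Finsupp.mem_span_range_iff_exists_finsupp]
        refine ⟨l, ?_⟩
        have hm0 : ∀ i : I,
            (Pi.single i (1 : L i) : ∀ i, L i) •
              ((l.sum fun k a => a • mfun k) - m) = 0 := by
          intro i
          rw [smul_sub]
          have hls : (l.sum fun k a => a • mfun k)
              = Finsupp.linearCombination (∀ i, L i) mfun l := by
            rw [Finsupp.linearCombination_apply]
          rw [hls, hkey i l]
          have h6 : (∑ k ∈ l.support, (l k i) • c i k : skewSub L M i)
              = ⟨(Pi.single i (1 : L i) : ∀ i, L i) • m, hx i⟩ := by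
            have h7 : ∑ k ∈ l.support, (l k i) • c i k
                = ∑ k ∈ l.support, (d i k) • c i k :=
              Finset.sum_congr rfl (fun k _ => by rw [hlk k i])
            rw [h7, ← Finset.sum_subset (hsupp i)
              (fun k _ hk => by rw [Finsupp.notMem_support_iff.mp hk, zero_smul])]
            have h8 : ∑ k ∈ (d i).support, (d i k) • c i k
                = Finsupp.linearCombination (L i) (c i) (d i) := by
              rw [Finsupp.linearCombination_apply, Finsupp.sum]
            rw [h8, hdd, Module.Basis.linearCombination_repr]
          rw [h6]
          exact sub_self _
        exact sub_eq_zero.mp (hinj _ hm0)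
      exact Module.Free.of_basis (Module.Basis.mk hind (fun x _ => hspan x))
end

section
/- The only open normal subgroup of SL_n(F), for F a finite extension of Q_p and n ≥ 1, is SL_n(F) itself. -/
/-- Topology on the special linear group, induced from the matrix topology. -/
noncomputable instance sLTopology (n : ℕ) (R : Type*) [CommRing R] [TopologicalSpace R] :
    TopologicalSpace (Matrix.SpecialLinearGroup (Fin n) R) :=
  TopologicalSpace.induced (fun g => (g : Matrix (Fin n) (Fin n) R)) inferInstance

open Matrix
namespace SLAux
variable {F : Type*} [Field F] {n : ℕ} (i j : Fin n)

def dvec (a : F) : Fin n → F :=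
  Function.update (Function.update (1 : Fin n → F) i a) j a⁻¹

variable {i j}

lemma dvec_apply_i (hij : i ≠ j) (a : F) : dvec i j a i = a := by
  simp [dvec, Function.update_of_ne hij]

lemma dvec_apply_j (a : F) : dvec i j a j = a⁻¹ := by simp [dvec]

lemma dvec_apply_other {k : Fin n} (hki : k ≠ i) (hkj : k ≠ j) (a : F) : dvec i j a k = 1 := by
  simp [dvec, Function.update_of_ne hkj, Function.update_of_ne hki]

lemma dvec_prod (hij : i ≠ j) {a : F} (ha : a ≠ 0) : ∏ k, dvec i j a k = 1 := by
  rw [dvec, Finset.prod_update_of_mem (Finset.mem_univ j),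
    Finset.prod_update_of_mem (by simp [hij] : i ∈ Finset.univ \ {j})]
  simp [inv_mul_cancel₀ ha]

lemma transvection_apply (c : F) (k l : Fin n) :
    transvection i j c k l = (if k = l then 1 else 0) + (if k = i ∧ l = j then c else 0) := by
  simp [transvection, Matrix.add_apply, Matrix.one_apply, Matrix.single, eq_comm, and_comm]

lemma diag_mul_transvection (hij : i ≠ j) {a : F} (ha : a ≠ 0) (c : F) :
    diagonal (dvec i j a) * transvection i j c
      = transvection i j (a * a * c) * diagonal (dvec i j a) := by
  ext k l
  rw [diagonal_mul, mul_diagonal, transvection_apply, transvection_apply]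
  by_cases hkl : k = l
  · subst hkl
    have : ¬ (k = i ∧ k = j) := by rintro ⟨rfl, rfl⟩; exact hij rfl
    simp [this]
  · simp only [if_neg hkl, zero_add]
    by_cases h : k = i ∧ l = j
    · obtain ⟨rfl, rfl⟩ := h
      simp [dvec_apply_i hij, dvec_apply_j]
      field_simp
    · simp [h]

end SLAux

namespace SLAux2
open SLAux
variable {F : Type*} [Field F] {n : ℕ} {i j : Fin n}

lemma six (hij : i ≠ j) {a : F} (ha : a ≠ 0) :
    transvection i j a * transvection j i (-a⁻¹) * transvection i j a *
      transvection i j (-1) * transvection j i 1 * transvection i j (-1)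
      = diagonal (dvec i j a) := by
  ext k l
  rcases eq_or_ne k i with hki | hki <;> rcases eq_or_ne k j with hkj | hkj <;>
    rcases eq_or_ne l i with hli | hli <;> rcases eq_or_ne l j with hlj | hlj <;>
    simp_all [transvection_apply, diagonal_apply, dvec, Function.update_apply] <;>
    first
      | tauto
      | (split_ifs <;> first | tauto | rfl | (field_simp <;> try ring))
end SLAux2

namespace SLAux3
open SLAux SLAux2
variable {F : Type*} [Field F] {n : ℕ}

/-- transvection as an element of SL_n. -/
def T (i j : Fin n) (hij : i ≠ j) (c : F) : Matrix.SpecialLinearGroup (Fin n) F :=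
  ⟨transvection i j c, det_transvection_of_ne i j hij c⟩

/-- two-index diagonal matrix as an element of SL_n. -/
def D (i j : Fin n) (hij : i ≠ j) {a : F} (ha : a ≠ 0) : Matrix.SpecialLinearGroup (Fin n) F :=
  ⟨diagonal (dvec i j a), by rw [det_diagonal]; exact dvec_prod hij ha⟩

lemma T_zero (i j : Fin n) (hij : i ≠ j) : T i j hij (0 : F) = 1 := by
  apply Subtype.ext; simp [T]

lemma D_conj_T (i j : Fin n) (hij : i ≠ j) {a : F} (ha : a ≠ 0) (c : F) :
    D i j hij ha * T i j hij c * (D i j hij ha)⁻¹ = T i j hij (a * a * c) := by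
  rw [mul_inv_eq_iff_eq_mul]
  apply Subtype.ext
  simp only [Matrix.SpecialLinearGroup.coe_mul, T, D]
  exact diag_mul_transvection hij ha c

lemma T_six (i j : Fin n) (hij : i ≠ j) {a : F} (ha : a ≠ 0) :
    T i j hij a * T j i hij.symm (-a⁻¹) * T i j hij a * T i j hij (-1) * T j i hij.symm 1 *
      T i j hij (-1) = D i j hij ha := by
  apply Subtype.ext
  simp only [Matrix.SpecialLinearGroup.coe_mul, T, D]
  exact six hij ha

lemma continuous_T {F : Type*} [NormedField F] {n : ℕ} (i j : Fin n) (hij : i ≠ j) :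
    Continuous fun c : F => T i j hij c := by
  apply continuous_induced_rng.mpr
  apply continuous_matrix
  intro k l
  simp only [T, transvection, Matrix.add_apply, Matrix.one_apply, Matrix.single, Matrix.of_apply]
  refine Continuous.add continuous_const ?_
  simp only [Matrix.of_apply]
  split_ifs
  exacts [continuous_id, continuous_const]

end SLAux3

namespace SLAux4
open SLAux SLAux2 SLAux3
variable {F : Type*} [Field F] {n : ℕ}

/-- membership in `N` at the level of matrices -/
def MemN (N : Subgroup (Matrix.SpecialLinearGroup (Fin n) F)) (M : Matrix (Fin n) (Fin n) F) :
    Prop :=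
  ∃ x ∈ N, (x : Matrix (Fin n) (Fin n) F) = M

lemma MemN.mul {N : Subgroup (Matrix.SpecialLinearGroup (Fin n) F)}
    {A B : Matrix (Fin n) (Fin n) F} (hA : MemN N A) (hB : MemN N B) : MemN N (A * B) := by
  obtain ⟨x, hx, rfl⟩ := hA
  obtain ⟨y, hy, rfl⟩ := hB
  exact ⟨x * y, mul_mem hx hy, rfl⟩

lemma MemN.one {N : Subgroup (Matrix.SpecialLinearGroup (Fin n) F)} : MemN N (1 : Matrix (Fin n) (Fin n) F) :=
  ⟨1, one_mem N, rfl⟩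

lemma diag_mem (N : Subgroup (Matrix.SpecialLinearGroup (Fin n) F))
    (hD : ∀ (i j : Fin n) (hij : i ≠ j) (a : F) (ha : a ≠ 0), MemN N (diagonal (dvec i j a)))
    (d : Fin n → F) (hd : ∏ k, d k = 1) : MemN N (diagonal d) := by
  suffices H : ∀ (s : Finset (Fin n)) (d : Fin n → F), (∀ k ∉ s, d k = 1) → ∏ k, d k = 1 →
      MemN N (diagonal d) from H Finset.univ d (by simp) hd
  intro s
  induction s using Finset.induction_on with
  | empty =>
    intro d h1 _
    have hd1 : d = fun _ => 1 := funext fun k => h1 k (Finset.notMem_empty k)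
    rw [hd1]
    simpa [Matrix.diagonal_one] using (MemN.one (N := N))
  | insert i₀ s hi ih =>
    intro d h1 hd
    by_cases hdi : d i₀ = 1
    · refine ih d (fun k hk => ?_) hd
      rcases eq_or_ne k i₀ with rfl | hne
      · exact hdi
      · exact h1 k (by simp [hk, hne])
    · have hs : s.Nonempty := by
        rw [Finset.nonempty_iff_ne_empty]
        rintro rfl
        apply hdi
        have hone : ∀ k ∈ Finset.univ, k ≠ i₀ → d k = 1 := fun k _ hk => h1 k (by simp [hk])
        calc d i₀ = ∏ k, d k := (Finset.prod_eq_single i₀ hone (by simp)).symm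
        _ = 1 := hd
      obtain ⟨j₀, hj₀⟩ := hs
      have hij : i₀ ≠ j₀ := fun h => hi (h ▸ hj₀)
      have hdi0 : d i₀ ≠ 0 := by
        intro h0
        have := Finset.prod_eq_zero (Finset.mem_univ i₀) h0
        rw [hd] at this
        exact one_ne_zero this
      set d' := Function.update (Function.update d i₀ 1) j₀ (d i₀ * d j₀) with hd'def
      have hprod' : ∏ k, d' k = 1 := by
        rw [hd'def, Finset.prod_update_of_mem (Finset.mem_univ j₀),
          Finset.prod_update_of_mem (by simp [hij] : i₀ ∈ Finset.univ \ {j₀})]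
        rw [← Finset.mul_prod_erase _ d (Finset.mem_univ j₀),
          ← Finset.mul_prod_erase _ d
            (by simp [Finset.mem_erase, hij] : i₀ ∈ Finset.univ.erase j₀)] at hd
        simp only [Finset.erase_eq] at hd
        rw [one_mul]
        linear_combination hd
      have hsupp' : ∀ k ∉ s, d' k = 1 := by
        intro k hk
        rcases eq_or_ne k j₀ with rfl | hkj
        · exact absurd hj₀ hk
        · rcases eq_or_ne k i₀ with rfl | hki
          · rw [hd'def, Function.update_of_ne hij, Function.update_self]
          · rw [hd'def, Function.update_of_ne hkj, Function.update_of_ne hki]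
            exact h1 k (by simp [hk, hki])
      have hfun : (d' * dvec i₀ j₀ (d i₀)) = d := by
        funext k
        rcases eq_or_ne k j₀ with rfl | hkj
        · rw [hd'def, Pi.mul_apply, Function.update_self, dvec_apply_j]
          field_simp
        · rcases eq_or_ne k i₀ with rfl | hki
          · rw [Pi.mul_apply, hd'def, Function.update_of_ne hij, Function.update_self,
              dvec_apply_i hij, one_mul]
          · rw [Pi.mul_apply, hd'def, Function.update_of_ne hkj, Function.update_of_ne hki,
              dvec_apply_other hki hkj, mul_one]
      have step : diagonal d = diagonal d' * diagonal (dvec i₀ j₀ (d i₀)) := by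
        rw [diagonal_mul_diagonal]
        exact congrArg diagonal hfun.symm
      rw [step]
      exact (ih d' hsupp' hprod').mul (hD i₀ j₀ hij (d i₀) hdi0)

end SLAux4

namespace SLAux5
open SLAux SLAux2 SLAux3 SLAux4

lemma T_mem (p : ℕ) [Fact p.Prime] {F : Type*} [NormedField F] [NormedAlgebra ℚ_[p] F] {n : ℕ}
    (N : Subgroup (Matrix.SpecialLinearGroup (Fin n) F)) [N.Normal]
    (hN : IsOpen (N : Set (Matrix.SpecialLinearGroup (Fin n) F)))
    (i j : Fin n) (hij : i ≠ j) (c : F) : T i j hij c ∈ N := by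
  have hopen : IsOpen ((fun c : F => T i j hij c) ⁻¹' N) := hN.preimage (continuous_T i j hij)
  have h0 : (0 : F) ∈ (fun c : F => T i j hij c) ⁻¹' N := by
    simp only [Set.mem_preimage, T_zero, SetLike.mem_coe]
    exact N.one_mem
  obtain ⟨ε, hε, hball⟩ := Metric.isOpen_iff.mp hopen 0 h0
  set x : F := algebraMap ℚ_[p] F (p : ℚ_[p]) with hx
  have hp0 : ((p : ℚ_[p]) : ℚ_[p]) ≠ 0 := by
    exact_mod_cast Nat.cast_ne_zero.mpr (Fact.out (p := p.Prime)).ne_zero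
  have hx0 : x ≠ 0 := by
    intro h
    exact hp0 ((algebraMap ℚ_[p] F).injective (by simpa [hx] using h))
  have hx1 : ‖x‖ < 1 := by
    rw [hx, norm_algebraMap', Padic.norm_p]
    rw [inv_lt_one_iff₀]
    right
    exact_mod_cast (Fact.out (p := p.Prime)).one_lt
  have hlim : Filter.Tendsto (fun k : ℕ => x ^ k * x ^ k * c) Filter.atTop (nhds 0) := by
    have h := tendsto_pow_atTop_nhds_zero_of_norm_lt_one hx1
    simpa using (h.mul h).mul_const c
  obtain ⟨k, hk⟩ := (NormedAddCommGroup.tendsto_nhds_zero.mp hlim ε hε).exists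
  set a : F := x ^ k with hadef
  have ha : a ≠ 0 := pow_ne_zero _ hx0
  have h1 : T i j hij (a * a * c) ∈ N :=
    hball (by simpa [Metric.mem_ball, dist_zero_right] using hk)
  have h2 := Subgroup.Normal.conj_mem ‹N.Normal› _ h1 (D i j hij (inv_ne_zero ha))
  rw [D_conj_T i j hij (inv_ne_zero ha)] at h2
  have harg : a⁻¹ * a⁻¹ * (a * a * c) = c := by field_simp
  rwa [harg] at h2

end SLAux5


open SLAux SLAux2 SLAux3 SLAux4 SLAux5 Matrix Matrix.Pivot in
/-- For `F` a finite extension of `ℚ_p` and `n ≥ 1`, the only open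
normal subgroup of `SL_n(F)` is `SL_n(F)` itself. -/
theorem only_open_normal_subgroup_of_SL
    (p : ℕ) [Fact p.Prime] (F : Type*) [NormedField F] [NormedAlgebra ℚ_[p] F]
    [FiniteDimensional ℚ_[p] F] (n : ℕ) (hn : 1 ≤ n)
    (N : Subgroup (Matrix.SpecialLinearGroup (Fin n) F)) [N.Normal]
    (hN : IsOpen (N : Set (Matrix.SpecialLinearGroup (Fin n) F))) :
    N = ⊤ := by
  rw [Subgroup.eq_top_iff']
  intro g
  have hTm : ∀ (i j : Fin n) (hij : i ≠ j) (c : F), MemN N (transvection i j c) :=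
    fun i j hij c => ⟨T i j hij c, T_mem p N hN i j hij c, rfl⟩
  have hDm : ∀ (i j : Fin n) (hij : i ≠ j) (a : F) (_ : a ≠ 0),
      MemN N (diagonal (dvec i j a)) := by
    intro i j hij a ha
    refine ⟨D i j hij ha, ?_, rfl⟩
    rw [← T_six i j hij ha]
    exact mul_mem (mul_mem (mul_mem (mul_mem (mul_mem
      (T_mem p N hN i j hij a) (T_mem p N hN j i hij.symm (-a⁻¹))) (T_mem p N hN i j hij a))
      (T_mem p N hN i j hij (-1))) (T_mem p N hN j i hij.symm 1)) (T_mem p N hN i j hij (-1))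
  have hlist : ∀ L : List (TransvectionStruct (Fin n) F),
      MemN N (L.map TransvectionStruct.toMatrix).prod := by
    intro L
    induction L with
    | nil => simpa using (MemN.one (N := N))
    | cons t L ih =>
      rw [List.map_cons, List.prod_cons]
      exact (hTm t.i t.j t.hij t.c).mul ih
  obtain ⟨L, L', dd, hM⟩ :=
    exists_list_transvec_mul_diagonal_mul_list_transvec (g : Matrix (Fin n) (Fin n) F)
  have hdet : ∏ k, dd k = 1 := by
    have hg : det (g : Matrix (Fin n) (Fin n) F) = 1 := g.prop
    rw [hM] at hg
    simpa [det_mul, det_diagonal] using hg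
  have hmem : MemN N ((g : Matrix (Fin n) (Fin n) F)) := by
    rw [hM]
    exact ((hlist L).mul (diag_mem N hDm dd hdet)).mul (hlist L')
  obtain ⟨y, hy, hyg⟩ := hmem
  have : y = g := Subtype.coe_injective hyg
  exact this ▸ hy
end

section
/- Let K ⊆ K_m ⊆ K_∞ be fields with K_m = K_∞^{Z_m} for a descending chain of groups Z_m acting on K_∞ fixing K, and suppose the subgroups Z_m form a neighbourhood basis of the identity of a topological group Z. Then the category of finite-dimensional smooth semilinear representations Rep^{sm}_{K_∞}(Z) (those free of finite rank over K_∞ with K_∞·V^{Z_m} = V for some m) is the increasing union over m of the essential images of the base-change functors K_∞ ⊗_{K_m} − from Rep^{Z_m}_{K_m}(Z), and each essential image is {V : K_∞·V^{Z_m} = V} and is closed under subquotients. -/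
set_option synthInstance.maxHeartbeats 1000000
set_option maxHeartbeats 1000000

instance AddAut.group (A : Type*) [Add A] : Group (AddAut A) where
  mul g h := AddEquiv.trans h g
  one := AddEquiv.refl _
  inv := AddEquiv.symm
  mul_assoc _ _ _ := rfl
  one_mul _ := rfl
  mul_one _ := rfl
  inv_mul_cancel := AddEquiv.self_trans_symm

section Setup

variable {Z : Type*} [Group Z] {Kinf : Type*} [Field Kinf] [MulSemiringAction Z Kinf]

/-- The fixed subfield `K_m = K_∞^{Z_m}` of a subgroup `Z_m ≤ Z`. -/
def fixedSubfield (Zm : Subgroup Z) : Subfield Kinf where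
  carrier := {x | ∀ z ∈ Zm, z • x = x}
  mul_mem' := by intro a b ha hb z hz; rw [smul_mul', ha z hz, hb z hz]
  one_mem' := by intro z hz; rw [smul_one]
  add_mem' := by intro a b ha hb z hz; rw [smul_add, ha z hz, hb z hz]
  zero_mem' := by intro z hz; rw [smul_zero]
  neg_mem' := by intro a ha z hz; rw [smul_neg, ha z hz]
  inv_mem' := by intro a ha z hz; rw [smul_inv'', ha z hz]

variable {V : Type*} [AddCommGroup V] [Module Kinf V] (μ : Z →* AddAut V)
variable (hsemi : ∀ (z : Z) (a : Kinf) (v : V), μ z (a • v) = (z • a) • μ z v)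

/-- The `Z_m`-invariants `V^{Z_m}`, as a `K_m = K_∞^{Z_m}`-vector space. -/
def smoothInvariants (Zm : Subgroup Z) :
    Submodule (fixedSubfield (Kinf := Kinf) Zm) V where
  carrier := {v | ∀ z ∈ Zm, μ z v = v}
  add_mem' := by intro a b ha hb z hz; rw [map_add, ha z hz, hb z hz]
  zero_mem' := by intro z hz; exact map_zero (μ z)
  smul_mem' := by
    intro c v hv z hz
    show μ z ((c : Kinf) • v) = _
    rw [hsemi z c v, c.2 z hz, hv z hz]; rfl

noncomputable instance (Zm : Subgroup Z) :
    Algebra (fixedSubfield (Kinf := Kinf) Zm) Kinf :=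
  (fixedSubfield (Kinf := Kinf) Zm).subtype.toAlgebra

/-- The natural map `K_∞ ⊗_{K_m} V^{Z_m} → V`. -/
noncomputable def smoothNatMap (Zm : Subgroup Z) :
    TensorProduct (fixedSubfield (Kinf := Kinf) Zm) Kinf (smoothInvariants μ hsemi Zm)
      →ₗ[fixedSubfield (Kinf := Kinf) Zm] V :=
  TensorProduct.lift
    { toFun := fun a =>
        { toFun := fun w => a • (w : V)
          map_add' := by intro w w'; simp
          map_smul' := by
            intro c w
            show a • ((c : Kinf) • (w : V)) = (c : Kinf) • (a • (w : V))
            rw [smul_comm] }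
      map_add' := by intro a a'; ext w; simp [add_smul]
      map_smul' := by
        intro c a; ext w
        show ((c : Kinf) * a) • (w : V) = (c : Kinf) • (a • (w : V))
        rw [mul_smul] }

end Setup

section AuxProofs

variable {Z : Type*} [Group Z] {Kinf : Type*} [Field Kinf] [MulSemiringAction Z Kinf]
variable {V : Type*} [AddCommGroup V] [Module Kinf V] (μ : Z →* AddAut V)
variable (hsemi : ∀ (z : Z) (a : Kinf) (v : V), μ z (a • v) = (z • a) • μ z v)

/-- Elements of `V^{Z_m}` that are linearly independent over `K_m` remain
linearly independent over `K_∞`. -/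
theorem aux_li (Zm : Subgroup Z) {ι : Type*}
    (w : ι → smoothInvariants μ hsemi Zm)
    (h : LinearIndependent (fixedSubfield (Kinf := Kinf) Zm) w) :
    LinearIndependent Kinf (fun i => (w i : V)) := by
  classical
  rw [linearIndependent_iff']
  intro s
  induction s using Finset.strongInduction with
  | _ s ih =>
    intro g hg
    by_contra hcon
    push_neg at hcon
    obtain ⟨i₀, hi₀s, hi₀⟩ := hcon
    set a := g i₀ with ha
    have ha0 : a ≠ 0 := hi₀
    set g' : ι → Kinf := fun i => a⁻¹ * g i with hg'def
    have hg'0 : ∑ i ∈ s, g' i • (w i : V) = 0 := by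
      have h1 : ∑ i ∈ s, g' i • (w i : V) = a⁻¹ • ∑ i ∈ s, g i • (w i : V) := by
        rw [Finset.smul_sum]
        exact Finset.sum_congr rfl fun i _ => by rw [hg'def, mul_smul]
      rw [h1, hg, smul_zero]
    have hgi₀ : g' i₀ = 1 := by
      rw [hg'def]; exact inv_mul_cancel₀ ha0
    have hfix : ∀ z ∈ Zm, ∀ i ∈ s, z • g' i = g' i := by
      intro z hz
      have h1 : ∑ i ∈ s, (z • g' i) • (w i : V) = 0 := by
        have h2 := congrArg (μ z) hg'0
        rw [map_sum, map_zero] at h2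
        rw [← h2]
        exact Finset.sum_congr rfl fun i _ => by
          rw [hsemi z (g' i) ((w i : V)), (w i).2 z hz]
      have hall : ∑ i ∈ s, (z • g' i - g' i) • (w i : V) = 0 := by
        simp only [sub_smul]
        rw [Finset.sum_sub_distrib, h1, hg'0, sub_zero]
      have h0 : (z • g' i₀ - g' i₀) • (w i₀ : V) = 0 := by
        rw [hgi₀, smul_one, sub_self, zero_smul]
      have herase : ∑ i ∈ s.erase i₀, (z • g' i - g' i) • (w i : V) = 0 := by
        rw [Finset.sum_erase s h0, hall]
      have hind := ih (s.erase i₀) (Finset.erase_ssubset hi₀s)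
        (fun i => z • g' i - g' i) herase
      intro i hi
      by_cases hii : i = i₀
      · subst hii; rw [hgi₀, smul_one]
      · exact sub_eq_zero.mp (hind i (Finset.mem_erase.mpr ⟨hii, hi⟩))
    have hmem : ∀ i, i ∈ s → g' i ∈ fixedSubfield (Kinf := Kinf) Zm :=
      fun i hi z hz => hfix z hz i hi
    set G : ι → fixedSubfield (Kinf := Kinf) Zm :=
      fun i => if hi : i ∈ s then ⟨g' i, hmem i hi⟩ else 0 with hGdef
    have hGsum : ∑ i ∈ s, G i • w i = 0 := by
      have hc : ((∑ i ∈ s, G i • w i : smoothInvariants μ hsemi Zm) : V)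
          = ∑ i ∈ s, g' i • (w i : V) := by
        rw [Submodule.coe_sum]
        refine Finset.sum_congr rfl fun i hi => ?_
        rw [hGdef]
        simp only [dif_pos hi]
        rfl
      exact Subtype.ext (by rw [hc, hg'0]; rfl)
    have hG := linearIndependent_iff'.mp h s G hGsum i₀ hi₀s
    rw [hGdef] at hG
    simp only [dif_pos hi₀s] at hG
    have : g' i₀ = 0 := congrArg Subtype.val hG
    rw [hgi₀] at this
    exact one_ne_zero this

/-- The value of `smoothNatMap` on pure tensors. -/
theorem aux_natMap_tmul (Zm : Subgroup Z) (a : Kinf) (x : smoothInvariants μ hsemi Zm) :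
    smoothNatMap μ hsemi Zm (a ⊗ₜ x) = a • (x : V) := rfl

include hsemi in
/-- The action of elements of `Z_m` on coordinates in a `Z_m`-invariant basis. -/
theorem aux_repr (Zm : Subgroup Z) {ι : Type*} (b : Module.Basis ι Kinf V)
    (hb : ∀ i, ∀ z ∈ Zm, μ z (b i) = b i) {z : Z} (hz : z ∈ Zm) (x : V) :
    b.repr (μ z x) = (b.repr x).mapRange (z • ·) (smul_zero z) := by
  have hx : μ z x = Finsupp.linearCombination Kinf b
      ((b.repr x).mapRange (z • ·) (smul_zero z)) := by
    conv_lhs => rw [← b.linearCombination_repr x]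
    rw [Finsupp.linearCombination_apply, Finsupp.linearCombination_apply,
      Finsupp.sum_mapRange_index (fun i => zero_smul Kinf (b i)), map_finsuppSum]
    exact Finsupp.sum_congr fun i _ => by rw [hsemi, hb i z hz]
  rw [hx, b.repr_linearCombination]

/-- The canonical family: a `K_m`-basis of the invariants, viewed in `V`. -/
noncomputable def auxFam (Zm : Subgroup Z) :
    Module.Basis.ofVectorSpaceIndex (fixedSubfield (Kinf := Kinf) Zm) (smoothInvariants μ hsemi Zm)
      → V :=
  fun i => ((Module.Basis.ofVectorSpace (fixedSubfield (Kinf := Kinf) Zm)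
    (smoothInvariants μ hsemi Zm) i : smoothInvariants μ hsemi Zm) : V)

theorem auxFam_mem (Zm : Subgroup Z) (i) :
    auxFam μ hsemi Zm i ∈ smoothInvariants μ hsemi Zm :=
  (Module.Basis.ofVectorSpace (fixedSubfield (Kinf := Kinf) Zm) (smoothInvariants μ hsemi Zm) i).2

theorem aux_fam_li (Zm : Subgroup Z) :
    LinearIndependent Kinf (auxFam μ hsemi Zm) :=
  aux_li μ hsemi Zm _
    (Module.Basis.ofVectorSpace (fixedSubfield (Kinf := Kinf) Zm)
      (smoothInvariants μ hsemi Zm)).linearIndependent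

theorem aux_fam_span (Zm : Subgroup Z)
    (hspan : Submodule.span Kinf ((smoothInvariants μ hsemi Zm : Set V)) = ⊤) :
    ⊤ ≤ Submodule.span Kinf (Set.range (auxFam μ hsemi Zm)) := by
  classical
  rw [← hspan]
  apply Submodule.span_le.mpr
  intro v hv
  have h1 : (⟨v, hv⟩ : smoothInvariants μ hsemi Zm) ∈
      Submodule.span (fixedSubfield (Kinf := Kinf) Zm)
        (Set.range (Module.Basis.ofVectorSpace (fixedSubfield (Kinf := Kinf) Zm)
          (smoothInvariants μ hsemi Zm))) := by
    rw [Module.Basis.span_eq]; trivial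
  refine Submodule.span_induction
    (p := fun (x : smoothInvariants μ hsemi Zm) _ =>
      (x : V) ∈ Submodule.span Kinf (Set.range (auxFam μ hsemi Zm)))
    ?_ ?_ ?_ ?_ h1
  · rintro x ⟨i, rfl⟩
    exact Submodule.subset_span ⟨i, rfl⟩
  · exact Submodule.zero_mem _
  · intro x y _ _ hx hy
    exact Submodule.add_mem _ hx hy
  · intro c x _ hx
    have hcx : ((c • x : smoothInvariants μ hsemi Zm) : V) = (c : Kinf) • (x : V) := rfl
    rw [hcx]
    exact Submodule.smul_mem _ _ hx

/-- The quasi-inverse property: the natural map is bijective on `Rep^m`. -/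
theorem aux_bij (Zm : Subgroup Z)
    (hspan : Submodule.span Kinf ((smoothInvariants μ hsemi Zm : Set V)) = ⊤) :
    Function.Bijective (smoothNatMap μ hsemi Zm) := by
  classical
  set Km := fixedSubfield (Kinf := Kinf) Zm
  set S := smoothInvariants μ hsemi Zm with hS
  set f := smoothNatMap μ hsemi Zm with hf
  have hsm : ∀ (a : Kinf) (x : TensorProduct Km Kinf S), f (a • x) = a • f x := by
    intro a x
    induction x using TensorProduct.induction_on with
    | zero => rw [smul_zero, map_zero, smul_zero]
    | tmul c w =>
      rw [TensorProduct.smul_tmul', aux_natMap_tmul, aux_natMap_tmul,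
        smul_eq_mul, mul_smul]
    | add x y hx hy => rw [smul_add, map_add, hx, hy, map_add, smul_add]
  constructor
  · -- injectivity
    let bS := Module.Basis.ofVectorSpace Km S
    have hli : LinearIndependent Kinf (fun i => ((bS i : S) : V)) :=
      aux_li μ hsemi Zm _ bS.linearIndependent
    have hrep : ∀ x : TensorProduct Km Kinf S,
        ∃ g : Module.Basis.ofVectorSpaceIndex Km S →₀ Kinf,
          x = g.sum fun i c => c ⊗ₜ[Km] (bS i : S) := by
      intro x
      induction x using TensorProduct.induction_on with
      | zero => exact ⟨0, by rw [Finsupp.sum_zero_index]⟩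
      | tmul a w =>
        refine ⟨(bS.repr w).mapRange (· • a) (zero_smul Km a), ?_⟩
        rw [Finsupp.sum_mapRange_index (fun i => TensorProduct.zero_tmul Kinf ((bS i : S)))]
        have h1 : ∀ (i) (c : Km), ((c • a) ⊗ₜ[Km] (bS i : S)) = a ⊗ₜ[Km] (c • bS i) := by
          intro i c; rw [TensorProduct.smul_tmul]
        calc a ⊗ₜ[Km] w = a ⊗ₜ[Km] ((bS.repr w).sum fun i c => c • bS i) := by
              conv_lhs => rw [← bS.linearCombination_repr w]
              rw [Finsupp.linearCombination_apply]
          _ = (bS.repr w).sum fun i c => a ⊗ₜ[Km] (c • bS i) := by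
              rw [Finsupp.sum, Finsupp.sum, TensorProduct.tmul_sum]
          _ = (bS.repr w).sum fun i c => (c • a) ⊗ₜ[Km] (bS i : S) := by
              exact Finsupp.sum_congr fun i _ => (h1 i _).symm
      | add x y hx hy =>
        obtain ⟨gx, hgx⟩ := hx
        obtain ⟨gy, hgy⟩ := hy
        refine ⟨gx + gy, ?_⟩
        rw [Finsupp.sum_add_index' (fun i => TensorProduct.zero_tmul Kinf ((bS i : S)))
          (fun i c₁ c₂ => TensorProduct.add_tmul c₁ c₂ ((bS i : S))), hgx, hgy]
    have hker : ∀ x : TensorProduct Km Kinf S, f x = 0 → x = 0 := by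
      intro x hx
      obtain ⟨g, hg⟩ := hrep x
      have hfx : f x = Finsupp.linearCombination Kinf (fun i => ((bS i : S) : V)) g := by
        rw [hg, map_finsuppSum, Finsupp.linearCombination_apply]
        exact Finsupp.sum_congr fun i _ => aux_natMap_tmul μ hsemi Zm _ _
      have hg0 : g = 0 := linearIndependent_iff.mp hli g (by rw [← hfx, hx])
      rw [hg, hg0, Finsupp.sum_zero_index]
    intro x y hxy
    have : f (x - y) = 0 := by rw [map_sub, hxy, sub_self]
    exact sub_eq_zero.mp (hker _ this)
  · -- surjectivity
    intro v
    have hv : v ∈ Submodule.span Kinf (S : Set V) := by rw [hspan]; trivial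
    refine Submodule.span_induction (p := fun v _ => ∃ x, f x = v) ?_ ?_ ?_ ?_ hv
    · intro x hx
      exact ⟨(1 : Kinf) ⊗ₜ[Km] (⟨x, hx⟩ : S), by rw [aux_natMap_tmul, one_smul]⟩
    · exact ⟨0, map_zero f⟩
    · rintro x y _ _ ⟨x', rfl⟩ ⟨y', rfl⟩
      exact ⟨x' + y', map_add f x' y'⟩
    · rintro a x _ ⟨x', rfl⟩
      exact ⟨a • x', hsm a x'⟩

/-- The core of closure under subobjects: a `Z_m`-stable subspace is spanned
by its intersection with the invariants. -/
theorem aux_sub (Zm : Subgroup Z) [FiniteDimensional Kinf V] {ι : Type*}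
    (b : Module.Basis ι Kinf V) (hb : ∀ i, b i ∈ smoothInvariants μ hsemi Zm) :
    ∀ (n : ℕ) (W : Submodule Kinf V), Module.finrank Kinf W = n →
      (∀ z ∈ Zm, ∀ v ∈ W, μ z v ∈ W) →
      W ≤ Submodule.span Kinf ((W : Set V) ∩ (smoothInvariants μ hsemi Zm : Set V)) := by
  classical
  intro n
  induction n using Nat.strong_induction_on with
  | _ n ih =>
    intro W hrank hstab
    rcases eq_or_ne W ⊥ with hbot | hbot
    · rw [hbot]; exact bot_le
    · have hex : ∃ k, ∃ x, x ∈ W ∧ x ≠ 0 ∧ (b.repr x).support.card = k := by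
        obtain ⟨x, hxW, hx0⟩ := W.ne_bot_iff.mp hbot
        exact ⟨_, x, hxW, hx0, rfl⟩
      obtain ⟨x, hxW, hx0, hxcard⟩ := Nat.find_spec hex
      have hmin : ∀ y, y ∈ W → y ≠ 0 → Nat.find hex ≤ (b.repr y).support.card :=
        fun y hyW hy0 => Nat.find_min' hex ⟨y, hyW, hy0, rfl⟩
      have hsupp_ne : (b.repr x).support.Nonempty := by
        rw [Finsupp.support_nonempty_iff]
        exact fun h => hx0 (b.repr.map_eq_zero_iff.mp h)
      obtain ⟨i₀, hi₀⟩ := hsupp_ne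
      set a := b.repr x i₀ with hadef
      have ha0 : a ≠ 0 := Finsupp.mem_support_iff.mp hi₀
      set x' := a⁻¹ • x with hx'def
      have hx'W : x' ∈ W := W.smul_mem _ hxW
      have hx'0 : x' ≠ 0 := smul_ne_zero (inv_ne_zero ha0) hx0
      have hreprx' : b.repr x' = a⁻¹ • b.repr x := by rw [hx'def, map_smul]
      have hsuppx' : (b.repr x').support = (b.repr x).support := by
        rw [hreprx', Finsupp.support_smul_eq (inv_ne_zero ha0)]
      have hcoord : b.repr x' i₀ = 1 := by
        rw [hreprx', Finsupp.smul_apply, ← hadef, smul_eq_mul, inv_mul_cancel₀ ha0]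
      have hbinv : ∀ i, ∀ z ∈ Zm, μ z (b i) = b i := fun i z hz => hb i z hz
      have hinv : ∀ z ∈ Zm, μ z x' = x' := by
        intro z hz
        by_contra hne
        set d := μ z x' - x' with hd
        have hdW : d ∈ W := W.sub_mem (hstab z hz _ hx'W) hx'W
        have hd0 : d ≠ 0 := sub_ne_zero.mpr hne
        have hreprd : b.repr d = (b.repr x').mapRange (z • ·) (smul_zero z) - b.repr x' := by
          rw [hd, map_sub, aux_repr μ hsemi Zm b hbinv hz]
        have hsubset : (b.repr d).support ⊆ (b.repr x').support.erase i₀ := by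
          intro j hj
          rw [Finsupp.mem_support_iff] at hj
          rw [Finset.mem_erase, Finsupp.mem_support_iff]
          constructor
          · rintro rfl
            apply hj
            rw [hreprd, Finsupp.sub_apply, Finsupp.mapRange_apply, hcoord, smul_one, sub_self]
          · intro hj0
            apply hj
            rw [hreprd, Finsupp.sub_apply, Finsupp.mapRange_apply, hj0, smul_zero, sub_zero]
        have hlt : (b.repr d).support.card < Nat.find hex := by
          calc (b.repr d).support.card ≤ ((b.repr x').support.erase i₀).card :=
                Finset.card_le_card hsubset
            _ < (b.repr x').support.card := by
                apply Finset.card_erase_lt_of_mem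
                rw [hsuppx']; exact hi₀
            _ = Nat.find hex := by rw [hsuppx', hxcard]
        exact absurd (hmin d hdW hd0) (not_le.mpr hlt)
      have hx'S : x' ∈ smoothInvariants μ hsemi Zm := hinv
      -- the coordinate functional at i₀, restricted to W
      set φ : W →ₗ[Kinf] Kinf :=
        (Finsupp.lapply i₀).comp ((b.repr : V →ₗ[Kinf] (ι →₀ Kinf)).comp W.subtype) with hφ
      have hφval : ∀ w : W, φ w = b.repr (w : V) i₀ := fun w => rfl
      have hφx' : φ ⟨x', hx'W⟩ = 1 := by rw [hφval]; exact hcoord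
      have hφsurj : Function.Surjective φ := by
        intro c
        refine ⟨c • ⟨x', hx'W⟩, ?_⟩
        rw [map_smul, hφx', smul_eq_mul, mul_one]
      have hrange : LinearMap.range φ = ⊤ := LinearMap.range_eq_top.mpr hφsurj
      have hdim : 1 + Module.finrank Kinf (LinearMap.ker φ) = n := by
        have h1 := LinearMap.finrank_range_add_finrank_ker φ
        rw [hrange, finrank_top, Module.finrank_self, hrank] at h1
        exact h1
      set W₂ := (LinearMap.ker φ).map W.subtype with hW₂
      have hW₂le : W₂ ≤ W := Submodule.map_subtype_le _ _
      have hW₂rank : Module.finrank Kinf W₂ = Module.finrank Kinf (LinearMap.ker φ) :=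
        Submodule.finrank_map_subtype_eq _ _
      have hW₂lt : Module.finrank Kinf W₂ < n := by omega
      have hW₂mem : ∀ v : V, v ∈ W₂ ↔ ∃ h : v ∈ W, b.repr v i₀ = 0 := by
        intro v
        constructor
        · rintro ⟨⟨v, hv⟩, hker, rfl⟩
          exact ⟨hv, hker⟩
        · rintro ⟨hv, h0⟩
          exact ⟨⟨v, hv⟩, h0, rfl⟩
      have hstab₂ : ∀ z ∈ Zm, ∀ v ∈ W₂, μ z v ∈ W₂ := by
        intro z hz v hv
        obtain ⟨hvW, hv0⟩ := (hW₂mem v).mp hv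
        refine (hW₂mem _).mpr ⟨hstab z hz v hvW, ?_⟩
        rw [aux_repr μ hsemi Zm b hbinv hz, Finsupp.mapRange_apply, hv0, smul_zero]
      have hih := ih _ hW₂lt W₂ rfl hstab₂
      intro w hw
      set c := b.repr w i₀ with hc
      have hyW : w - c • x' ∈ W := W.sub_mem hw (W.smul_mem _ hx'W)
      have hyW₂ : w - c • x' ∈ W₂ := by
        refine (hW₂mem _).mpr ⟨hyW, ?_⟩
        rw [map_sub, map_smul, Finsupp.sub_apply, Finsupp.smul_apply, hcoord,
          smul_eq_mul, mul_one, ← hc, sub_self]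
      have hyspan := hih hyW₂
      have hspan2 : w - c • x' ∈
          Submodule.span Kinf ((W : Set V) ∩ (smoothInvariants μ hsemi Zm : Set V)) := by
        refine Submodule.span_mono ?_ hyspan
        exact Set.inter_subset_inter_left _ hW₂le
      have hx'span : x' ∈
          Submodule.span Kinf ((W : Set V) ∩ (smoothInvariants μ hsemi Zm : Set V)) :=
        Submodule.subset_span ⟨hx'W, hx'S⟩
      have heq : w = (w - c • x') + c • x' := by abel
      rw [heq]
      exact Submodule.add_mem _ hspan2 (Submodule.smul_mem _ _ hx'span)

end AuxProofs

open Filter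

/-- let `Z` be a topological group acting on a field `K_∞` fixing
`K`, with a descending chain of subgroups `Z_m` forming a neighbourhood basis
of the identity, and `K_m = K_∞^{Z_m}`.  For finite-dimensional semilinear
representations `V` of `Z` over `K_∞`:
(1) `V` is smooth (i.e. `K_∞ · V^U = V` for some open subgroup `U`) iff it lies
    in one of the subcategories `Rep^m` (i.e. `K_∞ · V^{Z_m} = V` for some
    `m`); so `Rep^{sm}` is the increasing union of the `Rep^m`;
(2) each `Rep^m`, which is the essential image of base change
    `K_∞ ⊗_{K_m} − : Rep^{Z_m}_{K_m}(Z) → Rep_{K_∞}(Z)` intrinsically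
    described as `{V : K_∞ · V^{Z_m} = V}`, has `(−)^{Z_m}` as quasi-inverse:
    the natural map `K_∞ ⊗_{K_m} V^{Z_m} → V` is bijective for `V ∈ Rep^m`;
(3) each `Rep^m` is closed under subobjects and quotients. -/
theorem smooth_semilinear_reps_union_of_levels
    {Z : Type*} [Group Z] [TopologicalSpace Z] [IsTopologicalGroup Z]
    {Kinf : Type*} [Field Kinf] [MulSemiringAction Z Kinf]
    (Zm : ℕ → Subgroup Z) (hdesc : ∀ m, Zm (m + 1) ≤ Zm m)
    (hbasis : (nhds (1 : Z)).HasBasis (fun _ : ℕ => True) (fun m => (Zm m : Set Z)))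
    {V : Type*} [AddCommGroup V] [Module Kinf V] [FiniteDimensional Kinf V]
    (μ : Z →* AddAut V)
    (hsemi : ∀ (z : Z) (a : Kinf) (v : V), μ z (a • v) = (z • a) • μ z v) :
    -- (1) smoothness is equivalent to membership in some `Rep^m`
    ((∃ U : Subgroup Z, IsOpen (U : Set Z) ∧
        Submodule.span Kinf {v : V | ∀ z ∈ U, μ z v = v} = ⊤) ↔
      (∃ m : ℕ,
        Submodule.span Kinf ((smoothInvariants μ hsemi (Zm m) : Set V)) = ⊤)) ∧
    -- (2) `(−)^{Z_m}` is a quasi-inverse to `K_∞ ⊗_{K_m} −` on `Rep^m`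
    (∀ m : ℕ,
      Submodule.span Kinf ((smoothInvariants μ hsemi (Zm m) : Set V)) = ⊤ →
      Function.Bijective (smoothNatMap μ hsemi (Zm m))) ∧
    -- (3) `Rep^m` is closed under subobjects and quotients
    (∀ m : ℕ,
      Submodule.span Kinf ((smoothInvariants μ hsemi (Zm m) : Set V)) = ⊤ →
      ∀ W : Submodule Kinf V, (∀ (z : Z), ∀ v ∈ W, μ z v ∈ W) →
        (Submodule.span Kinf ((W : Set V) ∩ (smoothInvariants μ hsemi (Zm m) : Set V)) = W ∧
        ∀ (μQ : Z →* AddAut (V ⧸ W)),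
          (∀ (z : Z) (v : V),
            μQ z (Submodule.Quotient.mk v) = Submodule.Quotient.mk (μ z v)) →
          Submodule.span Kinf {x : V ⧸ W | ∀ z ∈ Zm m, μQ z x = x} = ⊤)) := by
  refine ⟨⟨?_, ?_⟩, ?_, ?_⟩
  · -- (1) forward
    rintro ⟨U, hUopen, hUspan⟩
    have hU1 : (U : Set Z) ∈ nhds 1 := hUopen.mem_nhds U.one_mem
    obtain ⟨m, -, hm⟩ := hbasis.mem_iff.mp hU1
    refine ⟨m, ?_⟩
    rw [eq_top_iff, ← hUspan]
    apply Submodule.span_mono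
    intro v hv z hz
    exact hv z (hm hz)
  · -- (1) backward
    rintro ⟨m, hm⟩
    exact ⟨Zm m, Subgroup.isOpen_of_mem_nhds _ (hbasis.mem_of_mem (i := m) trivial), hm⟩
  · -- (2)
    intro m hm
    exact aux_bij μ hsemi (Zm m) hm
  · -- (3)
    intro m hm W hW
    have hb : ∀ i, (Module.Basis.mk (aux_fam_li μ hsemi (Zm m)) (aux_fam_span μ hsemi (Zm m) hm)) i
        ∈ smoothInvariants μ hsemi (Zm m) := fun i => by
      rw [Module.Basis.mk_apply]
      exact auxFam_mem μ hsemi (Zm m) i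
    constructor
    · apply le_antisymm
      · exact Submodule.span_le.mpr Set.inter_subset_left
      · exact aux_sub μ hsemi (Zm m)
          (Module.Basis.mk (aux_fam_li μ hsemi (Zm m)) (aux_fam_span μ hsemi (Zm m) hm)) hb
          _ W rfl (fun z _ v hv => hW z v hv)
    · intro μQ hμQ
      rw [eq_top_iff]
      have hmap : Submodule.map W.mkQ
          (Submodule.span Kinf ((smoothInvariants μ hsemi (Zm m) : Set V)))
          ≤ Submodule.span Kinf {x : V ⧸ W | ∀ z ∈ Zm m, μQ z x = x} := by
        rw [Submodule.map_span]
        apply Submodule.span_le.mpr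
        rintro x ⟨v, hv, rfl⟩
        apply Submodule.subset_span
        intro z hz
        show μQ z (W.mkQ v) = W.mkQ v
        rw [show W.mkQ v = Submodule.Quotient.mk v from rfl, hμQ, hv z hz]
      rw [hm, Submodule.map_top, Submodule.range_mkQ] at hmap
      exact hmap
end
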